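/- Let G = V^t ⋊ H with V a faithful irreducible H-module, and let K = W₁X and M = W₂H^{v₂}, where W₁ ≤ W₂ are H-submodules of V^t with W₂ maximal, X ≤ H^{v₁}, and v₁, v₂ ∈ V^t. Then there exists u ∈ V^t such that K ∩ M = W₁·C_X(u), where C_X(u) is the centralizer of u in X. -/

import Mathlib

namespace PaperSDP

variable {V H : Type*} [AddCommGroup V] [Group H] [DistribMulAction H V] {t : ℕ}

/-- The diagonal action of `H` on `V^t`, as a homomorphism into the
(multiplicatively written) automorphism group of `V^t`. -/
def phi (V : Type*) [AddCommGroup V] (H : Type*) [Group H] [DistribMulAction H V]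
    (t : ℕ) : H →* MulAut (Multiplicative (Fin t → V)) where
  toFun h := AddEquiv.toMultiplicative (DistribMulAction.toAddAut H (Fin t → V) h)
  map_one' := by ext v; simp
  map_mul' h₁ h₂ := by ext v; simp [mul_smul]

/-- The semidirect product `G = V^t ⋊ H` with diagonal action. -/
abbrev SDP (V : Type*) [AddCommGroup V] (H : Type*) [Group H] [DistribMulAction H V]
    (t : ℕ) : Type _ :=
  (Multiplicative (Fin t → V)) ⋊[phi V H t] H

/-- The copy of `V^t` inside `G`. -/
def VtG (V : Type*) [AddCommGroup V] (H : Type*) [Group H] [DistribMulAction H V]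
    (t : ℕ) : Subgroup (SDP V H t) :=
  (SemidirectProduct.inl : Multiplicative (Fin t → V) →* SDP V H t).range

/-- The image in `G` of an additive subgroup `W` of `V^t`. -/
def subG (W : AddSubgroup (Fin t → V)) : Subgroup (SDP V H t) :=
  (AddSubgroup.toSubgroup W).map
    (SemidirectProduct.inl : Multiplicative (Fin t → V) →* SDP V H t)

/-- The element of `G` corresponding to `v ∈ V^t`. -/
def elemG (v : Fin t → V) : SDP V H t :=
  SemidirectProduct.inl (Multiplicative.ofAdd v)

/-- The conjugate `K^v = v⁻¹ K v` of a subgroup `K ≤ G` by an element `v ∈ V^t`. -/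
def conjG (K : Subgroup (SDP V H t)) (v : Fin t → V) : Subgroup (SDP V H t) :=
  K.map (MulAut.conj (elemG v)⁻¹).toMonoidHom

/-- The copy `H^v` of `H` in `G`, conjugated by `v ∈ V^t`. -/
def HG (V : Type*) [AddCommGroup V] (H : Type*) [Group H] [DistribMulAction H V]
    (t : ℕ) (v : Fin t → V) : Subgroup (SDP V H t) :=
  conjG (SemidirectProduct.inr : H →* SDP V H t).range v

/-- `W` is an `H`-submodule of `V^t` (an `H`-invariant additive subgroup). -/
def IsHSub (H : Type*) [Group H] [DistribMulAction H V]
    (W : AddSubgroup (Fin t → V)) : Prop :=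
  ∀ (h : H) (w : Fin t → V), w ∈ W → h • w ∈ W

/-- `W` is a maximal `H`-submodule of `V^t`. -/
def IsMaxHSub (H : Type*) [Group H] [DistribMulAction H V]
    (W : AddSubgroup (Fin t → V)) : Prop :=
  IsHSub H W ∧ W ≠ ⊤ ∧ ∀ W' : AddSubgroup (Fin t → V), IsHSub H W' → W < W' → W' = ⊤

/-- The action of `H` on `V` is (faithful and) irreducible. -/
def IsIrreducible (H : Type*) [Group H] (V : Type*) [AddCommGroup V]
    [DistribMulAction H V] : Prop :=
  (⊥ : AddSubgroup V) ≠ ⊤ ∧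
    ∀ W : AddSubgroup V, (∀ (h : H) (w : V), w ∈ W → h • w ∈ W) → W = ⊥ ∨ W = ⊤

/-- The action of `H` on `V` is faithful. -/
def IsFaithful (H : Type*) [Group H] (V : Type*) [AddCommGroup V]
    [DistribMulAction H V] : Prop :=
  ∀ h : H, (∀ v : V, h • v = v) → h = 1

/-- An `End_H(V)`-subspace of `V`: an additive subgroup stable under all
`H`-equivariant additive endomorphisms of `V`. -/
def IsFSub (H : Type*) [Group H] (V : Type*) [AddCommGroup V] [DistribMulAction H V]
    (Z : AddSubgroup V) : Prop :=
  ∀ f : V →+ V, (∀ (h : H) (v : V), f (h • v) = h • f v) → ∀ z ∈ Z, f z ∈ Z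

/-- The centralizer `C_{H*}(Z)` of a subset `Z ⊆ V` (embedded diagonally in `V^t`)
in the conjugate `H* = H^g` of `H`, inside `G`. -/
def CHstar (g : SDP V H t) (Z : AddSubgroup V) : Subgroup (SDP V H t) :=
  ((SemidirectProduct.inr : H →* SDP V H t).range.map (MulAut.conj g).toMonoidHom) ⊓
    Subgroup.centralizer ((fun z : V => elemG (H := H) (fun _ : Fin t => z)) '' Z)

end PaperSDP

/-! Since `W₁` is normal and lies in `M`, Dedekind's law gives `K ∩ M = W₁ (X ∩ M)`. An element of
`H^{v₁}` with `H`-part `h` lies in `M = W₂ H^{v₂}` iff `h • d - d ∈ W₂`, where `d = v₁ - v₂`.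
Splitting `V^t = W₂ ⊕ C` with `C` an `H`-invariant complement and `u` the `C`-component of `d`,
this holds iff `h` fixes `u`, i.e. iff the element centralizes `u`. -/

open PaperSDP SemidirectProduct

theorem Subgroup.sup_inf_assoc_of_normal {G : Type*} [Group G] {A : Subgroup G} [A.Normal]
    (B : Subgroup G) {C : Subgroup G} (hAC : A ≤ C) : (A ⊔ B) ⊓ C = A ⊔ B ⊓ C :=
  SetLike.coe_injective <| by
    rw [Subgroup.coe_inf, Subgroup.normal_mul, Subgroup.normal_mul,
      Subgroup.mul_inf_assoc _ _ _ hAC]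

theorem exists_forall_smul_sub_mem_iff {H M : Type*} [Group H] [AddCommGroup M]
    [DistribMulAction H M] {W C : AddSubgroup M}
    (hW : ∀ (h : H) (w : M), w ∈ W → h • w ∈ W) (hC : ∀ (h : H) (c : M), c ∈ C → h • c ∈ C)
    (hWC : IsCompl W C) (d : M) :
    ∃ u : M, ∀ h : H, h • d - d ∈ W ↔ h • u = u := by
  obtain ⟨w, hw, u, hu, rfl⟩ :=
    AddSubgroup.mem_sup.mp (hWC.codisjoint.eq_top ▸ AddSubgroup.mem_top d)
  refine ⟨u, fun h => ?_⟩
  have hsplit : h • (w + u) - (w + u) = (h • w - w) + (h • u - u) := by rw [smul_add]; abel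
  rw [hsplit, add_mem_cancel_left (W.sub_mem (hW h w hw) hw), ← sub_eq_zero]
  exact ⟨fun hmem => AddSubgroup.disjoint_def.mp hWC.disjoint hmem (C.sub_mem (hC h u hu) hu),
    fun h0 => h0 ▸ W.zero_mem⟩

namespace PaperSDP

variable {V H : Type*} [AddCommGroup V] [Group H] [DistribMulAction H V] {t : ℕ}

theorem exists_single_notMem {W : AddSubgroup (Fin t → V)} (hW : W ≠ ⊤) :
    ∃ i : Fin t, ∃ v : V, Pi.single i v ∉ W := by
  by_contra! hsingle
  refine hW (eq_top_iff.mpr fun x _ => ?_)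
  rw [← Finset.univ_sum_single x]
  exact W.sum_mem fun i _ => hsingle i (x i)

theorem IsHSub.sup {W W' : AddSubgroup (Fin t → V)} (hW : IsHSub H W) (hW' : IsHSub H W') :
    IsHSub H (W ⊔ W') := by
  intro h x hx
  obtain ⟨w, hw, w', hw', rfl⟩ := AddSubgroup.mem_sup.mp hx
  rw [smul_add]
  exact AddSubgroup.add_mem_sup (hW h w hw) (hW' h w' hw')

-- A coordinate copy of `V` not inside `W` meets `W` trivially by irreducibility of `V`, and
-- together with `W` spans `V^t` by maximality of `W`.
theorem exists_isHSub_isCompl {W : AddSubgroup (Fin t → V)} (hirr : IsIrreducible H V)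
    (hW : IsMaxHSub H W) : ∃ C : AddSubgroup (Fin t → V), IsHSub H C ∧ IsCompl W C := by
  obtain ⟨hWsub, hWtop, hWmax⟩ := hW
  obtain ⟨i, v₀, hv₀⟩ := exists_single_notMem hWtop
  let C := (AddMonoidHom.single (fun _ : Fin t => V) i).range
  have hC : IsHSub H C := by
    rintro h _ ⟨v, rfl⟩
    exact ⟨h • v, Pi.single_smul' i h v⟩
  have hdisj : W.comap (AddMonoidHom.single (fun _ : Fin t => V) i) = ⊥ := by
    refine (hirr.2 _ fun h v hv => ?_).resolve_right fun htop => hv₀ ?_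
    · simpa only [AddSubgroup.mem_comap, AddMonoidHom.single_apply, Pi.single_smul'] using
        hWsub h _ hv
    · exact (htop ▸ AddSubgroup.mem_top v₀ : v₀ ∈ W.comap _)
  refine ⟨C, hC, ⟨AddSubgroup.disjoint_def.mpr ?_, codisjoint_iff.mpr ?_⟩⟩
  · rintro _ hx ⟨v, rfl⟩
    have hv : v ∈ W.comap (AddMonoidHom.single (fun _ : Fin t => V) i) := hx
    rw [hdisj, AddSubgroup.mem_bot] at hv
    simp [hv]
  · refine hWmax _ (hWsub.sup hC) (lt_of_le_of_ne le_sup_left fun hWC => hv₀ ?_)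
    exact hWC ▸ AddSubgroup.mem_sup_right ⟨v₀, rfl⟩

theorem toAdd_phi (h : H) (n : Multiplicative (Fin t → V)) :
    Multiplicative.toAdd (phi V H t h n) = h • Multiplicative.toAdd n := rfl

theorem mem_subG_iff {W : AddSubgroup (Fin t → V)} {g : SDP V H t} :
    g ∈ subG W ↔ g.right = 1 ∧ Multiplicative.toAdd g.left ∈ W := by
  rw [subG, Subgroup.mem_map]
  constructor
  · rintro ⟨x, hx, rfl⟩
    exact ⟨rfl, hx⟩
  · rintro ⟨h1, h2⟩
    exact ⟨g.left, h2, SemidirectProduct.ext rfl h1.symm⟩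

theorem subG_mono {W W' : AddSubgroup (Fin t → V)} (hWW' : W ≤ W') :
    (subG W : Subgroup (SDP V H t)) ≤ subG W' :=
  Subgroup.map_mono (AddSubgroup.toSubgroup.monotone hWW')

theorem IsHSub.subG_normal {W : AddSubgroup (Fin t → V)} (hW : IsHSub H W) :
    (subG W : Subgroup (SDP V H t)).Normal := by
  refine ⟨fun n hn g => ?_⟩
  obtain ⟨hn1, hn2⟩ := mem_subG_iff.mp hn
  refine mem_subG_iff.mpr ⟨by simp [hn1], ?_⟩
  have hconj :
      Multiplicative.toAdd (g * n * g⁻¹).left = g.right • Multiplicative.toAdd n.left := by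
    simp only [mul_left, mul_right, inv_left, toAdd_mul, toAdd_inv, toAdd_phi, hn1,
      mul_one, smul_neg, smul_smul, mul_inv_cancel, one_smul]
    abel
  exact hconj ▸ hW _ _ hn2

theorem mem_HG_iff {v : Fin t → V} {g : SDP V H t} :
    g ∈ HG V H t v ↔ Multiplicative.toAdd g.left = g.right • v - v := by
  rw [HG, conjG, Subgroup.mem_map]
  constructor
  · rintro ⟨x, ⟨h, rfl⟩, rfl⟩
    simp only [MulEquiv.coe_toMonoidHom, MulAut.conj_apply, inv_inv, toAdd_mul, mul_left,
      mul_right, inv_left, inv_right, left_inl, right_inl, left_inr, right_inr, toAdd_phi, elemG,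
      toAdd_inv, toAdd_ofAdd, one_mul, mul_one, inv_one, one_smul, smul_neg, toAdd_one]
    abel
  · intro hg
    refine ⟨inr g.right, ⟨g.right, rfl⟩, SemidirectProduct.ext ?_ (by simp [elemG])⟩
    apply Multiplicative.toAdd.injective
    simp only [MulEquiv.coe_toMonoidHom, MulAut.conj_apply, inv_inv, toAdd_mul, mul_left,
      mul_right, inv_left, inv_right, left_inl, right_inl, left_inr, right_inr, toAdd_phi, elemG,
      toAdd_inv, toAdd_ofAdd, one_mul, inv_one, one_smul, smul_neg, hg, toAdd_one]
    abel

theorem mem_subG_sup_HG_iff {W : AddSubgroup (Fin t → V)} (hW : IsHSub H W) {v : Fin t → V}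
    {g : SDP V H t} :
    g ∈ subG W ⊔ HG V H t v ↔ Multiplicative.toAdd g.left - (g.right • v - v) ∈ W := by
  have := hW.subG_normal
  rw [Subgroup.mem_sup_of_normal_left]
  constructor
  · rintro ⟨a, ha, m, hm, rfl⟩
    obtain ⟨ha1, ha2⟩ := mem_subG_iff.mp ha
    simpa [ha1, mem_HG_iff.mp hm, toAdd_phi] using ha2
  · intro hg
    refine ⟨elemG (Multiplicative.toAdd g.left - (g.right • v - v)),
      mem_subG_iff.mpr ⟨rfl, hg⟩,
      ⟨Multiplicative.ofAdd (g.right • v - v), g.right⟩, mem_HG_iff.mpr rfl,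
      SemidirectProduct.ext ?_ (one_mul g.right)⟩
    apply Multiplicative.toAdd.injective
    simp only [elemG, mul_left, toAdd_mul, left_inl, right_inl, toAdd_phi, one_smul, toAdd_ofAdd]
    abel

theorem mem_centralizer_elemG_iff {u : Fin t → V} {g : SDP V H t} :
    g ∈ Subgroup.centralizer {elemG (H := H) u} ↔ g.right • u = u := by
  rw [Subgroup.mem_centralizer_singleton_iff]
  constructor
  · intro hc
    have hl := congrArg (fun z : SDP V H t => Multiplicative.toAdd z.left) hc
    simp only [mul_left, toAdd_phi, toAdd_mul, elemG, left_inl, right_inl, toAdd_ofAdd,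
      one_smul] at hl
    exact add_left_cancel (hl.trans (add_comm _ _))
  · intro hu
    refine SemidirectProduct.ext ?_ (by simp [elemG])
    apply Multiplicative.toAdd.injective
    simp only [mul_left, toAdd_phi, toAdd_mul, elemG, left_inl, right_inl, toAdd_ofAdd, one_smul,
      hu]
    abel

end PaperSDP

theorem inter_eq_of_le_general
    (V H : Type*) [AddCommGroup V] [Group H]
    [DistribMulAction H V]
    (hirr : IsIrreducible H V)
    (t : ℕ) (W₁ W₂ : AddSubgroup (Fin t → V)) (v₁ v₂ : Fin t → V)
    (X : Subgroup (SDP V H t))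
    (hW₁ : IsHSub H W₁) (hW₂ : IsMaxHSub H W₂) (hle : W₁ ≤ W₂)
    (hX : X ≤ HG V H t v₁) :
    ∃ u : Fin t → V,
      (subG W₁ ⊔ X) ⊓ (subG W₂ ⊔ HG V H t v₂) =
        subG W₁ ⊔ (X ⊓ Subgroup.centralizer {elemG (H := H) u}) := by
  obtain ⟨C, hC, hW₂C⟩ := exists_isHSub_isCompl hirr hW₂
  obtain ⟨u, hu⟩ := exists_forall_smul_sub_mem_iff hW₂.1 hC hW₂C (v₁ - v₂)
  refine ⟨u, ?_⟩
  have := hW₁.subG_normal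
  rw [Subgroup.sup_inf_assoc_of_normal _ ((subG_mono hle).trans le_sup_left)]
  congr 1
  ext x
  simp only [Subgroup.mem_inf]
  refine and_congr_right fun hx => ?_
  have hdiff : Multiplicative.toAdd x.left - (x.right • v₂ - v₂) =
      x.right • (v₁ - v₂) - (v₁ - v₂) := by
    rw [mem_HG_iff.mp (hX hx), smul_sub]
    abel
  rw [mem_subG_sup_HG_iff hW₂.1, mem_centralizer_elemG_iff, hdiff, hu]

/-- Let `G = V^t ⋊ H` with `V` a faithful irreducible `H`-module, and let
`K = W₁X` and `M = W₂H^{v₂}`, where `W₁ ≤ W₂` are `H`-submodules of `V^t` with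
`W₂` maximal, `X ≤ H^{v₁}`, and `v₁, v₂ ∈ V^t`.  Then there exists `u ∈ V^t`
such that `K ∩ M = W₁·C_X(u)`, where `C_X(u)` is the centralizer of `u` in `X`. -/
theorem inter_eq_of_le
    (p : ℕ) (hp : p.Prime) (V H : Type*) [AddCommGroup V] [Group H]
    [DistribMulAction H V] [Finite V] [Finite H] [Group.IsSolvable H]
    (helem : ∀ v : V, p • v = 0)
    (hfaith : IsFaithful H V) (hirr : IsIrreducible H V)
    (t : ℕ) (W₁ W₂ : AddSubgroup (Fin t → V)) (v₁ v₂ : Fin t → V)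
    (X : Subgroup (SDP V H t))
    (hW₁ : IsHSub H W₁) (hW₂ : IsMaxHSub H W₂) (hle : W₁ ≤ W₂)
    (hX : X ≤ HG V H t v₁) :
    ∃ u : Fin t → V,
      (subG W₁ ⊔ X) ⊓ (subG W₂ ⊔ HG V H t v₂) =
        subG W₁ ⊔ (X ⊓ Subgroup.centralizer {elemG (H := H) u}) :=
  inter_eq_of_le_general V H hirr t W₁ W₂ v₁ v₂ X hW₁ hW₂ hle hX
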